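/- If a probability measure μ on [0,1] ∪ {∞} satisfies ∫_{[0,t]} s dμ(s) = μ([0,t])² for all t ∈ [0,1], and μ([0,t)) = u/2 for some 0 ≤ t ≤ u ≤ 1, then μ([t,u]) = 0. -/

import Mathlib

open MeasureTheory Set Filter
open scoped ENNReal Topology

/-!
Splitting `[0, u] = [0, t) ∪ [t, u]` and bounding the integrand by `u` on `[t, u]` gives
`μ [0, u]² ≤ μ [0, t)² + u μ [t, u]`, the identity on `[0, t)` being the left limit of the
hypothesis. With `u = 2 μ [0, t)` and `μ [0, u] = μ [0, t) + μ [t, u]`, expanding the square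
leaves `μ [t, u]² ≤ 0`.
-/

theorem tendsto_measure_Iic_of_tendsto_of_lt {α : Type*} [MeasurableSpace α]
    [ConditionallyCompleteLinearOrder α] [TopologicalSpace α] [ClosedIicTopology α]
    (μ : Measure α) {x : α} {v : ℕ → α} (hv : Monotone v) (hlt : ∀ n, v n < x)
    (hlim : Tendsto v atTop (𝓝 x)) :
    Tendsto (fun n ↦ μ (Iic (v n))) atTop (𝓝 (μ (Iio x))) := by
  rw [← iUnion_Iic_eq_Iio_of_lt_of_tendsto hlt hlim]
  exact tendsto_measure_iUnion_atTop fun _ _ hmn ↦ Iic_subset_Iic.2 (hv hmn)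

theorem setLIntegral_Iio_eq_measure_sq_of_forall_lt (μ : Measure ℝ≥0∞) {x : ℝ≥0∞}
    (h : ∀ y < x, ∫⁻ s in Iic y, s ∂μ = μ (Iic y) ^ 2) :
    ∫⁻ s in Iio x, s ∂μ = μ (Iio x) ^ 2 := by
  rcases eq_zero_or_pos x with rfl | hx
  · simp
  obtain ⟨v, hv, hvx, hlim⟩ := exists_seq_strictMono_tendsto' hx
  have hlt : ∀ n, v n < x := fun n ↦ (hvx n).2
  have hν : ∀ A, MeasurableSet A → ∫⁻ s in A, s ∂μ = μ.withDensity id A :=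
    fun A hA ↦ (withDensity_apply _ hA).symm
  have hint := tendsto_measure_Iic_of_tendsto_of_lt (μ.withDensity id) hv.monotone hlt hlim
  have hsq := ((ENNReal.continuous_pow 2).tendsto _).comp
    (tendsto_measure_Iic_of_tendsto_of_lt μ hv.monotone hlt hlim)
  simp_rw [← hν _ measurableSet_Iic, h _ (hlt _)] at hint
  rw [hν _ measurableSet_Iio]
  exact tendsto_nhds_unique hint hsq

theorem ENNReal.eq_zero_of_add_sq_le {a c : ℝ≥0∞} (ha : a ≠ ∞) (hc : c ≠ ∞)
    (h : (a + c) ^ 2 ≤ a ^ 2 + 2 * a * c) : c = 0 := by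
  lift a to NNReal using ha
  lift c to NNReal using hc
  norm_cast at h ⊢
  rw [← NNReal.coe_le_coe] at h
  push_cast at h
  exact NNReal.coe_eq_zero.1 (by nlinarith [c.2])

theorem measure_Icc_eq_zero_of_two_mul_measure_Iio_eq (μ : Measure ℝ≥0∞) [IsFiniteMeasure μ]
    {x u : ℝ≥0∞} (hsq : ∀ y ≤ u, ∫⁻ s in Iic y, s ∂μ = μ (Iic y) ^ 2) (hxu : x ≤ u)
    (hhalf : 2 * μ (Iio x) = u) :
    μ (Icc x u) = 0 := by
  have hunion : Iio x ∪ Icc x u = Iic u := Iio_union_Icc_eq_Iic hxu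
  have hdisj : Disjoint (Iio x) (Icc x u) :=
    (Iio_disjoint_Ici le_rfl).mono_right Icc_subset_Ici_self
  have hleft : ∫⁻ s in Iio x, s ∂μ = μ (Iio x) ^ 2 :=
    setLIntegral_Iio_eq_measure_sq_of_forall_lt μ fun y hy ↦ hsq y (hy.le.trans hxu)
  have hright : ∫⁻ s in Icc x u, s ∂μ ≤ u * μ (Icc x u) :=
    (setLIntegral_mono measurable_const fun _ hs ↦ hs.2).trans_eq (setLIntegral_const _ _)
  refine ENNReal.eq_zero_of_add_sq_le (measure_ne_top μ (Iio x)) (measure_ne_top μ _) ?_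
  calc (μ (Iio x) + μ (Icc x u)) ^ 2 = μ (Iic u) ^ 2 := by
        rw [← hunion, measure_union hdisj measurableSet_Icc]
    _ = ∫⁻ s in Iio x, s ∂μ + ∫⁻ s in Icc x u, s ∂μ := by
        rw [← hsq u le_rfl, ← hunion, lintegral_union measurableSet_Icc hdisj]
    _ ≤ μ (Iio x) ^ 2 + 2 * μ (Iio x) * μ (Icc x u) := by
        rw [hleft, hhalf]
        gcongr

theorem stmt5 (μ : Measure ℝ≥0∞) [IsProbabilityMeasure μ]
    (hRDE : ∀ t ∈ Set.Icc (0:ℝ) 1,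
      ∫⁻ s in Set.Icc 0 (ENNReal.ofReal t), s ∂μ
        = (μ (Set.Icc 0 (ENNReal.ofReal t)))^2)
    (t u : ℝ) (htu : t ≤ u) (hu1 : u ≤ 1)
    (hhalf : μ (Set.Ico 0 (ENNReal.ofReal t)) = ENNReal.ofReal (u/2)) :
    μ (Set.Icc (ENNReal.ofReal t) (ENNReal.ofReal u)) = 0 := by
  have hsq : ∀ y ≤ ENNReal.ofReal u, ∫⁻ s in Iic y, s ∂μ = μ (Iic y) ^ 2 := by
    intro y hy
    have hy1 : y ≤ 1 := hy.trans (ENNReal.ofReal_le_one.2 hu1)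
    have hy_top : y ≠ ∞ := ne_top_of_le_ne_top ENNReal.one_ne_top hy1
    have hRDE_y := hRDE y.toReal
      ⟨ENNReal.toReal_nonneg, ENNReal.toReal_le_of_le_ofReal zero_le_one (by simpa)⟩
    rwa [ENNReal.ofReal_toReal hy_top, ← bot_eq_zero, Icc_bot] at hRDE_y
  refine measure_Icc_eq_zero_of_two_mul_measure_Iio_eq μ hsq (ENNReal.ofReal_le_ofReal htu) ?_
  rw [← Ico_bot, bot_eq_zero, hhalf, ← ENNReal.ofReal_ofNat 2, ← ENNReal.ofReal_mul zero_le_two]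
  congr 1
  ring
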